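/- arXiv:1610.02362 — 2 statements merged into one kernel-verified Lean document; each statement's English description precedes it below -/
import Mathlib

section
/- Let M be a smooth manifold, (V, ∇) a smooth vector bundle with connection on M, and F ∈ Ω²(M, End V) its curvature. Then the even differential form Tr(exp(F)) = Σ_{k≥0} (1/k!) Tr(F^k) ∈ Ω^{even}(M) is closed: d Tr(exp(F)) = 0. -/
/-!
The entries of `F` are even, hence central, so the trace is cyclic on products with a power
of `F`. The Bianchi identity `dF = [F, A]` propagates through the graded Leibniz rule to
`d(F^k) = [F^k, A]` for every `k`, and the trace of a commutator with a central-entried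
matrix vanishes. So every term `Tr(F^k)` of the Chern character is closed.
-/

namespace Matrix

variable {ι A : Type*} [Fintype ι] [Ring A]

theorem commute_pow_apply [DecidableEq ι] {X : Matrix ι ι A}
    (hX : ∀ i j x, Commute (X i j) x) (k : ℕ) (i j : ι) (x : A) : Commute ((X ^ k) i j) x := by
  induction k generalizing i j with
  | zero => by_cases h : i = j <;> simp [h]
  | succ k ih =>
    rw [pow_succ, mul_apply]
    exact Commute.sum_left _ _ _ fun l _ => (ih i l).mul_left (hX l j x)

theorem trace_mul_comm_of_commute {X : Matrix ι ι A} (hX : ∀ i j x, Commute (X i j) x)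
    (Y : Matrix ι ι A) : (X * Y).trace = (Y * X).trace := by
  simp only [trace, diag, mul_apply]
  rw [Finset.sum_comm]
  exact Finset.sum_congr rfl fun i _ => Finset.sum_congr rfl fun j _ => (hX j i _).eq

theorem trace_commutator_eq_zero {X : Matrix ι ι A} (hX : ∀ i j x, Commute (X i j) x)
    (B : Matrix ι ι A) : (X * B - B * X).trace = 0 := by
  rw [trace_sub, trace_mul_comm_of_commute hX, sub_self]

end Matrix

section GradedLeibniz

variable {ι A D S : Type*} [Fintype ι] [Ring A] [FunLike D A A] [FunLike S A A]
  (d : D) (σ : S)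

theorem map_one_eq_zero_of_leibniz [RingHomClass S A A]
    (hLeib : ∀ x y, d (x * y) = d x * y + σ x * d y) : d 1 = 0 := by
  simpa using hLeib 1 1

theorem Matrix.map_mul_of_leibniz [AddMonoidHomClass D A A]
    (hLeib : ∀ x y, d (x * y) = d x * y + σ x * d y)
    (X Y : Matrix ι ι A) : (X * Y).map d = X.map d * Y + X.map σ * Y.map d := by
  ext i j
  simp only [map_apply, mul_apply, add_apply, map_sum, hLeib, Finset.sum_add_distrib]

theorem Matrix.map_pow_eq_commutator [DecidableEq ι] [AddMonoidHomClass D A A]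
    [RingHomClass S A A] (hLeib : ∀ x y, d (x * y) = d x * y + σ x * d y)
    {X B : Matrix ι ι A} (hσX : X.map σ = X) (hdX : X.map d = X * B - B * X) (k : ℕ) :
    (X ^ k).map d = X ^ k * B - B * X ^ k := by
  induction k with
  | zero =>
    ext i j
    by_cases h : i = j <;> simp [h, map_one_eq_zero_of_leibniz d σ hLeib]
  | succ k ih =>
    rw [pow_succ', Matrix.map_mul_of_leibniz d σ hLeib, hσX, hdX, ih]
    noncomm_ring

theorem Matrix.map_curvature_of_odd [AddMonoidHomClass D A A] [RingHomClass S A A]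
    (hdσ : ∀ x, d (σ x) = -σ (d x))
    {Am : Matrix ι ι A} (hodd : Am.map σ = -Am) :
    (Am.map d + Am * Am).map σ = Am.map d + Am * Am := by
  have hσAm : ∀ i j, σ (Am i j) = -Am i j := fun i j => congrFun (congrFun hodd i) j
  ext i j
  simp only [map_apply, add_apply, mul_apply, map_add, map_sum, map_mul, hσAm, neg_mul_neg]
  rw [← neg_eq_iff_eq_neg.mpr (hdσ (Am i j)), hσAm, map_neg, neg_neg]

theorem Matrix.map_curvature_eq_commutator [AddMonoidHomClass D A A]
    (hLeib : ∀ x y, d (x * y) = d x * y + σ x * d y)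
    (hdd : ∀ x, d (d x) = 0) {Am : Matrix ι ι A} (hodd : Am.map σ = -Am) :
    (Am.map d + Am * Am).map d = (Am.map d + Am * Am) * Am - Am * (Am.map d + Am * Am) := by
  have hddAm : (Am.map d).map d = 0 := by ext i j; simp [hdd]
  have hsum : (Am.map d + Am * Am).map d = (Am.map d).map d + (Am * Am).map d := by
    ext i j; simp
  rw [hsum, hddAm, Matrix.map_mul_of_leibniz d σ hLeib, hodd]
  noncomm_ring

end GradedLeibniz

theorem chern_character_form_closed_general {A : Type*} [Ring A] [Algebra ℝ A]
    (σ : A →ₐ[ℝ] A) (d : A →ₗ[ℝ] A)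
    (hLeib : ∀ x y, d (x * y) = d x * y + σ x * d y)
    (hdd : ∀ x, d (d x) = 0)
    (hdσ : ∀ x, d (σ x) = - σ (d x))
    {n : ℕ} (Am : Matrix (Fin n) (Fin n) A)
    (hodd : Am.map σ = -Am)
    (F : Matrix (Fin n) (Fin n) A)
    (hF : F = Am.map d + Am * Am)
    (hEven : ∀ i j (x : A), Commute (F i j) x)
    (N : ℕ) :
    d (∑ k ∈ Finset.range N, ((k.factorial : ℝ))⁻¹ • Matrix.trace (F ^ k)) = 0 := by
  have hσF : F.map σ = F := hF ▸ Matrix.map_curvature_of_odd d σ hdσ hodd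
  have hBianchi : F.map d = F * Am - Am * F :=
    hF ▸ Matrix.map_curvature_eq_commutator d σ hLeib hdd hodd
  refine (map_sum d _ _).trans (Finset.sum_eq_zero fun k _ => ?_)
  rw [map_smul, AddMonoidHom.map_trace, Matrix.map_pow_eq_commutator d σ hLeib hσF hBianchi,
    Matrix.trace_commutator_eq_zero (Matrix.commute_pow_apply hEven k), smul_zero]

/-- The Chern character form `Tr(exp F) = Σₖ (1/k!) Tr(F^k)` is
closed.  Differential forms are modeled as an ℝ-algebra `A` with grading
involution `σ` and differential `d` satisfying the graded Leibniz rule and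
`d∘d = 0`; End(V)-valued forms are matrices over `A`.  The curvature of the
connection with (odd) local connection form `Am` is `F = d Am + Am ∧ Am`; it
is an even form so its entries commute with everything, and it is nilpotent
(`F^N = 0`, since forms of degree > dim M vanish).  Then
`d (Σ_{k<N} (1/k!) Tr(F^k)) = 0`. -/
theorem chern_character_form_closed {A : Type*} [Ring A] [Algebra ℝ A]
    (σ : A →ₐ[ℝ] A) (d : A →ₗ[ℝ] A)
    (hσσ : ∀ x, σ (σ x) = x)
    (hLeib : ∀ x y, d (x * y) = d x * y + σ x * d y)
    (hdd : ∀ x, d (d x) = 0)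
    (hdσ : ∀ x, d (σ x) = - σ (d x))
    {n : ℕ} (Am : Matrix (Fin n) (Fin n) A)
    (hodd : Am.map σ = -Am)
    (F : Matrix (Fin n) (Fin n) A)
    (hF : F = Am.map d + Am * Am)
    (hEven : ∀ i j (x : A), Commute (F i j) x)
    (N : ℕ) (hnil : F ^ N = 0) :
    d (∑ k ∈ Finset.range N, ((k.factorial : ℝ))⁻¹ • Matrix.trace (F ^ k)) = 0 :=
  chern_character_form_closed_general σ d hLeib hdd hdσ Am hodd F hF hEven N
end

section
/- Let F = dθ ⊗ α + θ dθ ⊗ a be a 𝔤-valued connection 1-form on ℝ^{0|1} (α odd, a even elements with values in 𝔤). Then the gauge transformation by g = exp(−θα) transforms A = dθ⊗α + θdθ⊗a into A′ = Ad_g A + g^*Θ = θ dθ ⊗ a′ for some even a′ ∈ 𝔤; in particular, when α is such that all higher brackets vanish appropriately (e.g. in a matrix group, working modulo θ² = 0), A′ = θdθ ⊗ (a + ½[α,α]) has vanishing dθ⊗(odd) component. Hence every connection on a trivial G-bundle over ℝ^{0|1} is gauge equivalent to a constant one of the form θdθ⊗a′. -/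
/-!
Since `θ² = 0` and `α` anticommutes with `θ`, the word `θαθ` vanishes; hence `(θα)² = 0`, so
`1 - θα` and `1 + θα` are mutually inverse, and every term of the gauge transform containing
`θα` twice (or `θα` followed by `θ`) drops out. What survives is `θdθ a` together with
`-A θα = θdθ α²`, the odd component `dθ α` of `A` being cancelled exactly by `g⁻¹ dg`.
-/

section Superpoint

variable {R : Type*} [Ring R]

theorem one_add_mul_one_sub_of_mul_self_eq_zero {x : R} (hx : x * x = 0) :
    (1 + x) * (1 - x) = 1 := by
  rw [← (Commute.one_left x).mul_self_sub_mul_self_eq, hx, mul_one, sub_zero]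

theorem one_sub_mul_one_add_of_mul_self_eq_zero {x : R} (hx : x * x = 0) :
    (1 - x) * (1 + x) = 1 := by
  simpa [sub_eq_add_neg] using one_add_mul_one_sub_of_mul_self_eq_zero (x := -x) (by simpa)

variable {θ dθ α a : R}

theorem mul_mul_eq_zero_of_anticomm (hθθ : θ * θ = 0) (hαθ : α * θ = -(θ * α)) :
    θ * α * θ = 0 := by
  rw [mul_assoc, hαθ, mul_neg, ← mul_assoc, hθθ, zero_mul, neg_zero]

theorem mul_self_eq_zero_of_anticomm (hθθ : θ * θ = 0) (hαθ : α * θ = -(θ * α)) :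
    θ * α * (θ * α) = 0 := by
  rw [← mul_assoc, mul_mul_eq_zero_of_anticomm hθθ hαθ, zero_mul]

theorem superpoint_connection_mul_eq (hθθ : θ * θ = 0) (hθdθ : θ * dθ = dθ * θ)
    (hαθ : α * θ = -(θ * α)) (haθ : a * θ = θ * a) :
    (dθ * α + θ * dθ * a) * (θ * α) = -(θ * dθ * (α * α)) := by
  have hodd : dθ * α * (θ * α) = -(θ * dθ * (α * α)) :=
    calc dθ * α * (θ * α) = dθ * (α * θ) * α := by noncomm_ring
      _ = -(θ * dθ * (α * α)) := by rw [hαθ, hθdθ]; noncomm_ring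
  have heven : θ * dθ * a * (θ * α) = 0 :=
    calc θ * dθ * a * (θ * α) = θ * (dθ * (a * θ)) * α := by noncomm_ring
      _ = 0 := by rw [haθ, ← mul_assoc dθ, ← hθdθ, ← mul_assoc, ← mul_assoc, hθθ]; noncomm_ring
  rw [add_mul, hodd, heven, add_zero]

theorem superpoint_gauge_transform_eq (hθθ : θ * θ = 0) (hθdθ : θ * dθ = dθ * θ)
    (hαθ : α * θ = -(θ * α)) (haθ : a * θ = θ * a) :
    (1 + θ * α) * (dθ * α + θ * dθ * a) * (1 - θ * α) + (1 + θ * α) * (-(dθ * α))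
      = θ * dθ * (a + α * α) := by
  have hθαθ := mul_mul_eq_zero_of_anticomm hθθ hαθ
  have hAθα := superpoint_connection_mul_eq hθθ hθdθ hαθ haθ
  calc _ = θ * dθ * a + θ * α * θ * (dθ * a) - (dθ * α + θ * dθ * a) * (θ * α)
          - θ * α * ((dθ * α + θ * dθ * a) * (θ * α)) := by noncomm_ring
    _ = θ * dθ * a + θ * α * θ * (dθ * a) + θ * dθ * (α * α)
          + θ * α * θ * (dθ * (α * α)) := by rw [hAθα]; noncomm_ring
    _ = θ * dθ * (a + α * α) := by rw [hθαθ]; noncomm_ring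

end Superpoint

theorem gauge_fixing_connection_on_superpoint_general
    {A : Type*} [Ring A] (θ dθ α a : A)
    (hθθ : θ * θ = 0)
    (hθdθ : θ * dθ = dθ * θ)
    (hαθ : α * θ = -(θ * α))
    (haθ : a * θ = θ * a) :
    -- g = 1 − θα is invertible with inverse 1 + θα:
    ((1 - θ * α) * (1 + θ * α) = 1 ∧ (1 + θ * α) * (1 - θ * α) = 1)
    -- the gauge transformed connection g⁻¹ A g + g⁻¹ dg is constant:
    ∧ (1 + θ * α) * (dθ * α + θ * dθ * a) * (1 - θ * α)
        + (1 + θ * α) * (-(dθ * α))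
      = θ * dθ * (a + α * α)
    -- in particular it is of the form θdθ ⊗ a′:
    ∧ ∃ a' : A,
        (1 + θ * α) * (dθ * α + θ * dθ * a) * (1 - θ * α)
          + (1 + θ * α) * (-(dθ * α))
        = θ * dθ * a' := by
  have hsq := mul_self_eq_zero_of_anticomm hθθ hαθ
  have hgauge := superpoint_gauge_transform_eq hθθ hθdθ hαθ haθ
  exact ⟨⟨one_sub_mul_one_add_of_mul_self_eq_zero hsq,
    one_add_mul_one_sub_of_mul_self_eq_zero hsq⟩, hgauge, a + α * α, hgauge⟩

/-- Every connection `A = dθ⊗α + θdθ⊗a` on the trivial `G`-bundle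
over `ℝ^{0|1}` is gauge equivalent, via `g = exp(−θα) = 1 − θα`, to the constant
connection `θdθ⊗(a + ½[α,α]) = θdθ⊗(a + α²)`; in particular the `dθ⊗(odd)`
component of the transformed connection vanishes.  We work in an ambient
ℝ-algebra containing the odd coordinate `θ`, the even generator `dθ`, the odd
𝔤-valued parameter `α` and the even 𝔤-valued parameter `a`, with the
supercommutation relations among them, and `dg = d(1 − θα) = −dθ·α`. -/
theorem gauge_fixing_connection_on_superpoint
    {A : Type*} [Ring A] [Algebra ℝ A] (θ dθ α a : A)
    (hθθ : θ * θ = 0)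
    (hθdθ : θ * dθ = dθ * θ)
    (hαθ : α * θ = -(θ * α))
    (hαdθ : α * dθ = dθ * α)
    (hadθ : a * dθ = dθ * a)
    (haθ : a * θ = θ * a) :
    -- g = 1 − θα is invertible with inverse 1 + θα:
    ((1 - θ * α) * (1 + θ * α) = 1 ∧ (1 + θ * α) * (1 - θ * α) = 1)
    -- the gauge transformed connection g⁻¹ A g + g⁻¹ dg is constant:
    ∧ (1 + θ * α) * (dθ * α + θ * dθ * a) * (1 - θ * α)
        + (1 + θ * α) * (-(dθ * α))
      = θ * dθ * (a + α * α)
    -- in particular it is of the form θdθ ⊗ a′: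
    ∧ ∃ a' : A,
        (1 + θ * α) * (dθ * α + θ * dθ * a) * (1 - θ * α)
          + (1 + θ * α) * (-(dθ * α))
        = θ * dθ * a' :=
  gauge_fixing_connection_on_superpoint_general θ dθ α a hθθ hθdθ hαθ haθ
end
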